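/- arXiv:0901.3859 — 2 statements merged into one kernel-verified Lean document; each statement's English description precedes it below -/
import Mathlib

section
/- Let A be a finite set, let e, f⁻, f⁺ : A → [0,∞) and M⁻, M⁺ : A × A → [0,∞), set f = f⁻ + f⁺ and M = M⁻ + M⁺, and let S⁻ = S(A, e, f⁻, M⁻). Define ê, f̂ on A \ S⁻ by f̂(a) = f⁺(a) + ∑_{b∈S⁻} M⁺(b,a) and ê(a) = e(a) − f⁻(a) − ∑_{b∈S⁻} M⁻(b,a), let M̂ be the restriction of M to (A \ S⁻) × (A \ S⁻), and let T⁺ be the map on subsets of A \ S⁻ built from (ê, f̂, M̂) and T the map on subsets of A built from (e, f, M). Then for every B ⊆ A \ S⁻ one has T⁺(B) = T(B ∪ S⁻) \ S⁻. -/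
open scoped Classical

/-- The map `T(B) = {a ∈ A : f(a) + ∑_{b ∈ B} M(b,a) > e(a)}` on subsets of a finite set `A`. -/
noncomputable def Tmap {A : Type*} [Fintype A] (e f : A → ℝ) (M : A → A → ℝ)
    (B : Finset A) : Finset A :=
  Finset.univ.filter (fun a => e a < f a + ∑ b ∈ B, M b a)

/-- `S` is the smallest fixed point of `T`. -/
def IsSmallestFP {A : Type*} (T : Finset A → Finset A) (S : Finset A) : Prop :=
  T S = S ∧ ∀ S' : Finset A, T S' = S' → S ⊆ S'

/-! For `a ∉ S`, the input `∑_{b ∈ S} M(b,a)` that a fixed set `S` sends to `a` can be absorbed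
into the external input, so `T(· ∪ S) \ S` is a map of the same shape on the complement of `S`;
splitting `f` and `M` into their two parts is then a rearrangement of the defining inequality. -/

open Finset

theorem sum_image_val_union_of_compl {A β : Type*} [DecidableEq A] [AddCommMonoid β] (S : Finset A)
    (B : Finset {a // a ∉ S}) (g : A → β) :
    ∑ b ∈ B.image Subtype.val ∪ S, g b = ∑ b ∈ B, g b.1 + ∑ b ∈ S, g b := by
  have hdisj : Disjoint (B.image Subtype.val) S := by
    simp only [disjoint_left, mem_image]
    rintro _ ⟨b, -, rfl⟩
    exact b.2
  rw [sum_union hdisj, sum_image Subtype.val_injective.injOn]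

section Tmap

variable {A : Type*} [Fintype A]

@[simp]
theorem mem_Tmap {e f : A → ℝ} {M : A → A → ℝ} {B : Finset A} {a : A} :
    a ∈ Tmap e f M B ↔ e a < f a + ∑ b ∈ B, M b a := by
  simp [Tmap]

theorem Tmap_sub_left (e f g : A → ℝ) (M : A → A → ℝ) (B : Finset A) :
    Tmap (fun a => e a - g a) f M B = Tmap e (fun a => f a + g a) M B := by
  ext a
  simp only [mem_Tmap, sub_lt_iff_lt_add, add_right_comm]

variable [DecidableEq A]

theorem image_val_Tmap_compl (e f : A → ℝ) (M : A → A → ℝ) (S : Finset A)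
    (B : Finset {a // a ∉ S}) :
    (Tmap (fun a => e a.1) (fun a => f a.1 + ∑ b ∈ S, M b a.1) (fun b a => M b.1 a.1) B).image
        Subtype.val = Tmap e f M (B.image Subtype.val ∪ S) \ S := by
  ext a
  simp only [mem_image, mem_Tmap, mem_sdiff, sum_image_val_union_of_compl]
  constructor
  · rintro ⟨a, ha, rfl⟩
    exact ⟨by linarith, a.2⟩
  · rintro ⟨ha, haS⟩
    exact ⟨⟨a, haS⟩, by linarith, rfl⟩

end Tmap

theorem Tplus_eq_T_union_sdiff_general {A : Type*} [Fintype A] [DecidableEq A]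
    (e fm fp : A → ℝ) (Mm Mp : A → A → ℝ)
    (Sm : Finset A) :
    -- for every `B ⊆ A \ S⁻`, one has `T⁺(B) = T(B ∪ S⁻) \ S⁻`
    ∀ B : Finset {a : A // a ∉ Sm},
      (Tmap (fun a => e a.1 - fm a.1 - ∑ b ∈ Sm, Mm b a.1)
            (fun a => fp a.1 + ∑ b ∈ Sm, Mp b a.1)
            (fun b a => Mm b.1 a.1 + Mp b.1 a.1) B).image Subtype.val
        = Tmap e (fun a => fm a + fp a) (fun b a => Mm b a + Mp b a)
            (B.image Subtype.val ∪ Sm) \ Sm := by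
  intro B
  rw [← image_val_Tmap_compl]
  congr 1
  simp only [sub_sub]
  rw [Tmap_sub_left]
  congr 1
  funext a
  rw [sum_add_distrib]
  ring

theorem Tplus_eq_T_union_sdiff {A : Type*} [Fintype A] [DecidableEq A]
    (e fm fp : A → ℝ) (Mm Mp : A → A → ℝ)
    (he : ∀ a, 0 ≤ e a)
    (hfm : ∀ a, 0 ≤ fm a) (hfp : ∀ a, 0 ≤ fp a)
    (hMm : ∀ b a, 0 ≤ Mm b a) (hMp : ∀ b a, 0 ≤ Mp b a)
    -- `S⁻` is the smallest fixed point for the data `(e, f⁻, M⁻)`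
    (Sm : Finset A)
    (hSm : IsSmallestFP (Tmap e fm Mm) Sm) :
    -- for every `B ⊆ A \ S⁻`, one has `T⁺(B) = T(B ∪ S⁻) \ S⁻`
    ∀ B : Finset {a : A // a ∉ Sm},
      (Tmap (fun a => e a.1 - fm a.1 - ∑ b ∈ Sm, Mm b a.1)
            (fun a => fp a.1 + ∑ b ∈ Sm, Mp b a.1)
            (fun b a => Mm b.1 a.1 + Mp b.1 a.1) B).image Subtype.val
        = Tmap e (fun a => fm a + fp a) (fun b a => Mm b a + Mp b a)
            (B.image Subtype.val ∪ Sm) \ Sm :=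
  Tplus_eq_T_union_sdiff_general e fm fp Mm Mp Sm
end

section
/- Let A be a finite set, let e, f : A → [0,∞) and M : A × A → [0,∞), and let A₂ ⊆ A with A₁ = A \ A₂. Define f̃ : A₁ → [0,∞) by f̃(a) = f(a) + ∑_{b∈A₂} M(b,a), and let ẽ and M̃ be the restrictions of e and M to A₁ and A₁ × A₁ respectively. Then S(A, e, f, M) \ A₂ ⊆ S(A₁, ẽ, f̃, M̃). -/
/-! The set `A₂ ∪ S₁` is closed under `T`: on `A₁` the data `(ẽ, f̃, M̃)` are exactly what `T`
sees once all of `A₂` is switched on. Since `T` is monotone (as `M ≥ 0`) and `Finset A` is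
well-founded, every `T`-closed set contains a fixed point, hence contains `S`. -/

open scoped Classical

open Finset

section FixedPoint

variable {α : Type*} {T : Finset α → Finset α}

theorem exists_fixed_point_subset_of_map_subset (hT : Monotone T) {W : Finset α}
    (hW : T W ⊆ W) : ∃ W' ⊆ W, T W' = W' := by
  induction W using Finset.strongInduction with
  | H W ih =>
    by_cases hfix : T W = W
    · exact ⟨W, Subset.refl W, hfix⟩
    · obtain ⟨W', hW', hfix'⟩ := ih (T W) (ssubset_of_subset_of_ne hW hfix) (hT hW)
      exact ⟨W', hW'.trans hW, hfix'⟩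

theorem IsSmallestFP.subset_of_map_subset {S W : Finset α} (hS : IsSmallestFP T S)
    (hT : Monotone T) (hW : T W ⊆ W) : S ⊆ W := by
  obtain ⟨W', hW', hfix⟩ := exists_fixed_point_subset_of_map_subset hT hW
  exact (hS.2 W' hfix).trans hW'

end FixedPoint

section Tmap

variable {A : Type*} [Fintype A] (e f : A → ℝ) (M : A → A → ℝ)

theorem Tmap_mono (hM : ∀ b a, 0 ≤ M b a) : Monotone (Tmap e f M) := by
  intro B B' hBB' a ha
  simp only [Tmap, mem_filter, mem_univ, true_and] at ha ⊢
  exact ha.trans_le <| add_le_add_right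
    (sum_le_sum_of_subset_of_nonneg hBB' fun b _ _ => hM b a) _

variable [DecidableEq A] (A₂ : Finset A)

theorem val_mem_Tmap_union_image_iff (B : Finset {a // a ∉ A₂}) (a : {a // a ∉ A₂}) :
    a.1 ∈ Tmap e f M (A₂ ∪ B.image Subtype.val) ↔
      a ∈ Tmap (fun a => e a.1) (fun a => f a.1 + ∑ b ∈ A₂, M b a.1)
        (fun b a => M b.1 a.1) B := by
  have hdisj : Disjoint A₂ (B.image Subtype.val) :=
    disjoint_right.mpr fun _ hb => by
      obtain ⟨b, -, rfl⟩ := mem_image.mp hb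
      exact b.2
  simp only [Tmap, mem_filter, mem_univ, true_and]
  rw [sum_union hdisj, sum_image fun x _ y _ h => Subtype.val_injective h, add_assoc]

theorem Tmap_union_image_subset {B : Finset {a // a ∉ A₂}}
    (hB : Tmap (fun a => e a.1) (fun a => f a.1 + ∑ b ∈ A₂, M b a.1)
        (fun b a => M b.1 a.1) B ⊆ B) :
    Tmap e f M (A₂ ∪ B.image Subtype.val) ⊆ A₂ ∪ B.image Subtype.val := by
  intro a ha
  by_cases ha₂ : a ∈ A₂
  · exact mem_union_left _ ha₂
  · have hmem := hB ((val_mem_Tmap_union_image_iff e f M A₂ B ⟨a, ha₂⟩).mp ha)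
    exact mem_union_right _ (mem_image_of_mem Subtype.val hmem)

end Tmap

theorem smallest_fixed_point_restrict_general {A : Type*} [Fintype A] [DecidableEq A]
    (e f : A → ℝ) (M : A → A → ℝ)
    (hM : ∀ b a, 0 ≤ M b a)
    (A₂ : Finset A)
    -- `S` is the smallest fixed point for the data `(A, e, f, M)`
    (S : Finset A)
    (hS : IsSmallestFP (Tmap e f M) S)
    -- `S₁` is the smallest fixed point on `A₁ = A \ A₂` for the data `(ẽ, f̃, M̃)`
    (S₁ : Finset {a : A // a ∉ A₂})
    (hS₁ : IsSmallestFP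
      (Tmap (fun a => e a.1)
            (fun a => f a.1 + ∑ b ∈ A₂, M b a.1)
            (fun b a => M b.1 a.1)) S₁) :
    S \ A₂ ⊆ S₁.image Subtype.val :=
  sdiff_le_iff.mpr <| hS.subset_of_map_subset (Tmap_mono e f M hM)
    (Tmap_union_image_subset e f M A₂ hS₁.1.subset)

theorem smallest_fixed_point_restrict {A : Type*} [Fintype A] [DecidableEq A]
    (e f : A → ℝ) (M : A → A → ℝ)
    (he : ∀ a, 0 ≤ e a) (hf : ∀ a, 0 ≤ f a) (hM : ∀ b a, 0 ≤ M b a)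
    (A₂ : Finset A)
    -- `S` is the smallest fixed point for the data `(A, e, f, M)`
    (S : Finset A)
    (hS : IsSmallestFP (Tmap e f M) S)
    -- `S₁` is the smallest fixed point on `A₁ = A \ A₂` for the data `(ẽ, f̃, M̃)`
    (S₁ : Finset {a : A // a ∉ A₂})
    (hS₁ : IsSmallestFP
      (Tmap (fun a => e a.1)
            (fun a => f a.1 + ∑ b ∈ A₂, M b a.1)
            (fun b a => M b.1 a.1)) S₁) :
    S \ A₂ ⊆ S₁.image Subtype.val :=
  smallest_fixed_point_restrict_general e f M hM A₂ S hS S₁ hS₁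
end
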